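/- arXiv:1507.00711 — 2 statements merged into one kernel-verified Lean document; each statement's English description precedes it below -/
import Mathlib

section
/- For every entire holomorphic function f on ℂ, there exists an entire holomorphic function g on ℂ such that f(z) = g(z+1) - g(z) for all z ∈ ℂ. -/
/-!
Guichard's construction. For each `k` the entire function
`P_k(z) = k!/(2πi) ∮_{|w| = (2k+1)π} e^{zw} / (w^{k+1} (e^w - 1)) dw`
satisfies `P_k(z+1) - P_k(z) = k!/(2πi) ∮ e^{zw} / w^{k+1} dw = z^k` by Cauchy's formula.
The circle of radius `ρ = (2k+1)π` runs midway between the poles `2πim` of `1/(e^w - 1)`,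
where `|e^w - 1| ≥ 1/2`; hence `|P_k(z)| ≤ 2 k! ρ^{-k} e^{ρ|z|} ≤ 2 e^{π|z|} (e^{2π|z|})^k`.
Such geometric growth in `k` is absorbed by the Taylor coefficients `a_k` of an entire `f`,
so `g = ∑ a_k P_k` converges locally uniformly and `g(z+1) - g(z) = ∑ a_k z^k = f(z)`.
-/

open Complex Metric
open scoped Real Nat NNReal ENNReal

lemma Complex.cos_im_nonpos_of_norm_eq_odd_mul_pi {k : ℕ} {w : ℂ} (hw : ‖w‖ = (2 * k + 1) * π)
    (hre : |w.re| ≤ 1) : Real.cos w.im ≤ 0 := by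
  set ρ := (2 * k + 1) * π
  have hρ : 1 ≤ ρ := by
    have : (1 : ℝ) ≤ 2 * k + 1 := by linarith [(Nat.cast_nonneg k : (0 : ℝ) ≤ k)]
    nlinarith [Real.pi_gt_three]
  have hsq : w.re ^ 2 + w.im ^ 2 = ρ ^ 2 := by
    rw [← hw, Complex.sq_norm, Complex.normSq_apply]; ring
  have him_le : |w.im| ≤ ρ := by
    nlinarith [sq_abs w.im, sq_nonneg w.re, abs_nonneg w.im]
  have him_ge : ρ - 1 ≤ |w.im| := by
    nlinarith [sq_abs w.im, sq_abs w.re, abs_nonneg w.re, abs_nonneg w.im]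
  rw [← Real.cos_abs, ← Real.cos_sub_nat_mul_two_pi _ k]
  apply Real.cos_nonpos_of_pi_div_two_le_of_le <;> nlinarith [Real.pi_gt_three]

lemma Complex.half_le_norm_exp_sub_one_of_norm_eq_odd_mul_pi {k : ℕ} {w : ℂ}
    (hw : ‖w‖ = (2 * k + 1) * π) : 1 / 2 ≤ ‖exp w - 1‖ := by
  have hlog : Real.log 2 < 1 := by linarith [Real.log_two_lt_d9]
  rcases le_or_gt (Real.log 2) w.re with hre | hre
  · have h2 : 2 ≤ Real.exp w.re := by
      simpa [Real.exp_log] using Real.exp_le_exp.mpr hre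
    have := norm_sub_norm_le (exp w) 1
    rw [norm_exp, norm_one] at this
    linarith
  rcases le_or_gt w.re (-Real.log 2) with hre' | hre'
  · have h2 : Real.exp w.re ≤ 1 / 2 := by
      simpa [Real.exp_neg, Real.exp_log] using Real.exp_le_exp.mpr hre'
    have := norm_sub_norm_le 1 (exp w)
    rw [norm_exp, norm_one, norm_sub_rev] at this
    linarith
  · have hcos := cos_im_nonpos_of_norm_eq_odd_mul_pi hw (abs_le.mpr ⟨by linarith, by linarith⟩)
    have hre_exp : (exp w - 1).re = Real.exp w.re * Real.cos w.im - 1 := by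
      simp [exp_re]
    have hprod : Real.exp w.re * Real.cos w.im ≤ 0 :=
      mul_nonpos_of_nonneg_of_nonpos (Real.exp_pos _).le hcos
    have := abs_re_le_norm (exp w - 1)
    rw [hre_exp] at this
    linarith [neg_le_abs (Real.exp w.re * Real.cos w.im - 1)]

theorem Complex.hasSum_pow_div_factorial (x : ℂ) : HasSum (fun n : ℕ => x ^ n / n !) (exp x) := by
  rw [exp_eq_exp_ℂ]
  exact NormedSpace.expSeries_div_hasSum_exp x

theorem hasSum_circleIntegral_mul_exp {R : ℝ} (hR : 0 ≤ R) {ψ : ℂ → ℂ}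
    (hψ : ContinuousOn ψ (sphere 0 R)) (z : ℂ) :
    HasSum (fun n : ℕ => (z ^ n / n !) * ∮ w in C(0, R), ψ w * w ^ n)
      (∮ w in C(0, R), ψ w * exp (z * w)) := by
  obtain ⟨M, hM⟩ := (isCompact_sphere (0 : ℂ) R).exists_bound_of_continuousOn hψ
  have hψγ : Continuous fun θ => ψ (circleMap 0 R θ) :=
    hψ.comp_continuous (continuous_circleMap 0 R) (circleMap_mem_sphere 0 hR)
  simp_rw [← smul_eq_mul (a := _ / _), ← circleIntegral.integral_smul, circleIntegral,
    deriv_circleMap]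
  refine intervalIntegral.hasSum_integral_of_dominated_convergence
    (fun n _ => R * M * (R * ‖z‖) ^ n / n !) (fun n => ?_) (fun n => ?_) ?_ ?_ ?_
  · exact (((continuous_circleMap 0 R).mul continuous_const).smul
      ((continuous_const (y := z ^ n / n !)).smul
        (hψγ.mul ((continuous_circleMap 0 R).pow n)))).aestronglyMeasurable
  · refine Filter.Eventually.of_forall fun θ _ => ?_
    have hγ : ‖circleMap 0 R θ‖ = R := by simp [abs_of_nonneg hR]
    simp only [smul_eq_mul, norm_mul, norm_div, norm_pow, norm_I, Complex.norm_natCast, hγ,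
      mul_pow]
    have hψM := hM _ (circleMap_mem_sphere 0 hR θ)
    have : 0 ≤ ‖z‖ ^ n / n ! * R ^ n := by positivity
    calc R * 1 * (‖z‖ ^ n / n ! * (‖ψ (circleMap 0 R θ)‖ * R ^ n))
        ≤ R * 1 * (‖z‖ ^ n / n ! * (M * R ^ n)) := by gcongr
      _ = R * M * (R ^ n * ‖z‖ ^ n) / n ! := by ring
  · exact Filter.Eventually.of_forall fun θ _ =>
      ((Real.summable_pow_div_factorial (R * ‖z‖)).mul_left (R * M)).congr fun n => by ring
  · exact intervalIntegrable_const
  · exact Filter.Eventually.of_forall fun θ _ =>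
      (((hasSum_pow_div_factorial _).mul_left _).mul_left _).congr_fun fun n => by
        simp only [smul_eq_mul]; ring

theorem Complex.differentiable_tsum_of_summable_bound_on_balls {ι E : Type*}
    [NormedAddCommGroup E] [NormedSpace ℂ E] [CompleteSpace E] {F : ι → ℂ → E}
    (hF : ∀ i, Differentiable ℂ (F i))
    (hbound : ∀ r, ∃ u : ι → ℝ, Summable u ∧ ∀ i, ∀ z ∈ ball (0 : ℂ) r, ‖F i z‖ ≤ u i) :
    Differentiable ℂ fun z => ∑' i, F i z := fun z => by
  obtain ⟨u, hu, hFu⟩ := hbound (‖z‖ + 1)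
  have hz : z ∈ ball (0 : ℂ) (‖z‖ + 1) := by simp
  exact (differentiableOn_tsum_of_summable_norm hu (fun i => (hF i).differentiableOn) isOpen_ball
    hFu z hz).differentiableAt (isOpen_ball.mem_nhds hz)

theorem differentiable_circleIntegral_mul_exp {R : ℝ} (hR : 0 ≤ R) {ψ : ℂ → ℂ}
    (hψ : ContinuousOn ψ (sphere 0 R)) :
    Differentiable ℂ fun z => ∮ w in C(0, R), ψ w * exp (z * w) := by
  obtain ⟨M, hM⟩ := (isCompact_sphere (0 : ℂ) R).exists_bound_of_continuousOn hψ
  simp_rw [← (hasSum_circleIntegral_mul_exp hR hψ _).tsum_eq]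
  refine differentiable_tsum_of_summable_bound_on_balls
    (fun n => ((differentiable_pow n).div_const _).mul_const _) fun r =>
      ⟨fun n => r ^ n / n ! * (2 * π * R * (M * R ^ n)), ?_, fun n z hz => ?_⟩
  · exact ((Real.summable_pow_div_factorial (r * R)).mul_left (2 * π * R * M)).congr
      fun n => by ring
  · have hzr : ‖z‖ ≤ r := (mem_ball_zero_iff.mp hz).le
    have hint : ‖∮ w in C(0, R), ψ w * w ^ n‖ ≤ 2 * π * R * (M * R ^ n) :=
      circleIntegral.norm_integral_le_of_norm_le_const hR fun w hw => by
        rw [norm_mul, norm_pow, mem_sphere_zero_iff_norm.mp hw]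
        exact mul_le_mul_of_nonneg_right (hM w hw) (pow_nonneg hR n)
    rw [norm_mul, norm_div, norm_pow, Complex.norm_natCast]
    have hr : 0 ≤ r := (norm_nonneg z).trans hzr
    dsimp only
    gcongr

namespace Guichard

noncomputable def radius (k : ℕ) : ℝ := (2 * k + 1) * π

noncomputable def kernel (k : ℕ) (w : ℂ) : ℂ := (w ^ (k + 1) * (exp w - 1))⁻¹

noncomputable def antidiffPow (k : ℕ) (z : ℂ) : ℂ :=
  k ! / (2 * π * I) * ∮ w in C(0, radius k), kernel k w * exp (z * w)

variable {k : ℕ} {z w : ℂ}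

lemma radius_pos (k : ℕ) : 0 < radius k := by unfold radius; positivity

lemma factorial_le_radius_pow (k : ℕ) : (k ! : ℝ) ≤ radius k ^ k :=
  calc (k ! : ℝ) ≤ (k : ℝ) ^ k := mod_cast Nat.factorial_le_pow k
    _ ≤ radius k ^ k := by
      gcongr
      unfold radius
      nlinarith [Real.pi_gt_three, (Nat.cast_nonneg k : (0 : ℝ) ≤ k)]

lemma half_le_norm_exp_sub_one (hw : w ∈ sphere (0 : ℂ) (radius k)) : 1 / 2 ≤ ‖exp w - 1‖ :=
  Complex.half_le_norm_exp_sub_one_of_norm_eq_odd_mul_pi (mem_sphere_zero_iff_norm.mp hw)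

lemma exp_sub_one_ne_zero (hw : w ∈ sphere (0 : ℂ) (radius k)) : exp w - 1 ≠ 0 := by
  have := half_le_norm_exp_sub_one hw
  exact norm_pos_iff.mp (show 0 < ‖exp w - 1‖ by linarith)

lemma continuousOn_kernel (k : ℕ) : ContinuousOn (kernel k) (sphere 0 (radius k)) := by
  refine ((continuous_pow _).mul (continuous_exp.sub continuous_const)).continuousOn.inv₀
    fun w hw => mul_ne_zero (pow_ne_zero _ (ne_of_mem_sphere hw (radius_pos k).ne'))
      (exp_sub_one_ne_zero hw)

lemma norm_kernel_le (hw : w ∈ sphere (0 : ℂ) (radius k)) :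
    ‖kernel k w‖ ≤ 2 / radius k ^ (k + 1) := by
  have hρ := radius_pos k
  rw [kernel, norm_inv, norm_mul, norm_pow, mem_sphere_zero_iff_norm.mp hw, div_eq_mul_inv,
    mul_comm, ← inv_inv (2 : ℝ), ← mul_inv]
  gcongr
  linarith [half_le_norm_exp_sub_one hw]

lemma antidiffPow_add_one_sub (k : ℕ) (z : ℂ) :
    antidiffPow k (z + 1) - antidiffPow k z = z ^ k := by
  have hρ := radius_pos k
  have hint : ∀ z : ℂ, CircleIntegrable (fun w => kernel k w * exp (z * w)) 0 (radius k) :=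
    fun z => ((continuousOn_kernel k).mul (by fun_prop)).circleIntegrable hρ.le
  have hcancel : ∀ w ∈ sphere (0 : ℂ) (radius k),
      kernel k w * exp ((z + 1) * w) - kernel k w * exp (z * w) =
        (1 / (w - 0) ^ (k + 1)) • exp (z * w) := by
    intro w hw
    have h0 := exp_sub_one_ne_zero hw
    have hw0 : w ≠ 0 := ne_of_mem_sphere hw hρ.ne'
    rw [kernel, add_mul, one_mul, exp_add, smul_eq_mul, sub_zero]
    field_simp
  have hcauchy := DifferentiableOn.circleIntegral_one_div_sub_center_pow_smul
    (f := fun w => exp (z * w)) (c := 0) hρ k (by fun_prop)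
  rw [antidiffPow, antidiffPow, ← mul_sub, ← circleIntegral.integral_sub (hint _) (hint _),
    circleIntegral.integral_congr hρ.le hcancel, hcauchy, iteratedDeriv_cexp_const_mul,
    smul_eq_mul]
  simp only [mul_zero, exp_zero, mul_one]
  have hk : (k ! : ℂ) ≠ 0 := Nat.cast_ne_zero.mpr k.factorial_ne_zero
  field_simp [two_pi_I_ne_zero]

lemma differentiable_antidiffPow (k : ℕ) : Differentiable ℂ (antidiffPow k) :=
  (differentiable_circleIntegral_mul_exp (radius_pos k).le (continuousOn_kernel k)).const_mul _

lemma norm_antidiffPow_le (k : ℕ) (z : ℂ) :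
    ‖antidiffPow k z‖ ≤ 2 * Real.exp (radius k * ‖z‖) := by
  have hρ := radius_pos k
  have hint : ‖∮ w in C(0, radius k), kernel k w * exp (z * w)‖ ≤
      2 * π * radius k * (2 / radius k ^ (k + 1) * Real.exp (radius k * ‖z‖)) :=
    circleIntegral.norm_integral_le_of_norm_le_const hρ.le fun w hw => by
      rw [norm_mul]
      refine mul_le_mul (norm_kernel_le hw) ?_ (norm_nonneg _) (by positivity)
      calc ‖exp (z * w)‖ ≤ Real.exp ‖z * w‖ := norm_exp_le_exp_norm _
        _ = Real.exp (radius k * ‖z‖) := by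
          rw [norm_mul, mem_sphere_zero_iff_norm.mp hw, mul_comm]
  have hnorm : ‖(k ! : ℂ) / (2 * π * I)‖ = k ! / (2 * π) := by
    simp [abs_of_pos Real.pi_pos]
  calc ‖antidiffPow k z‖
        = k ! / (2 * π) * ‖∮ w in C(0, radius k), kernel k w * exp (z * w)‖ := by
        rw [antidiffPow, norm_mul, hnorm]
    _ ≤ k ! / (2 * π) *
        (2 * π * radius k * (2 / radius k ^ (k + 1) * Real.exp (radius k * ‖z‖))) := by gcongr
    _ = 2 * (k ! / radius k ^ k) * Real.exp (radius k * ‖z‖) := by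
        field_simp
        ring
    _ ≤ 2 * 1 * Real.exp (radius k * ‖z‖) := by
        gcongr
        exact div_le_one_of_le₀ (factorial_le_radius_pow k) (by positivity)
    _ = 2 * Real.exp (radius k * ‖z‖) := by ring

lemma norm_antidiffPow_le_of_norm_le {r : ℝ} (hz : ‖z‖ ≤ r) :
    ‖antidiffPow k z‖ ≤ 2 * Real.exp (π * r) * Real.exp (2 * π * r) ^ k := by
  have hρ := radius_pos k
  calc ‖antidiffPow k z‖ ≤ 2 * Real.exp (radius k * r) :=
        (norm_antidiffPow_le k z).trans (by gcongr)
    _ = 2 * Real.exp (π * r) * Real.exp (2 * π * r) ^ k := by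
        rw [← Real.exp_nat_mul, mul_assoc, ← Real.exp_add, radius]
        ring_nf

theorem exists_differentiable_sub_eq_tsum (a : ℕ → ℂ)
    (ha : ∀ r : ℝ≥0, Summable fun k => ‖a k‖ * (r : ℝ) ^ k) :
    ∃ g : ℂ → ℂ, Differentiable ℂ g ∧ ∀ z, g (z + 1) - g z = ∑' k, a k * z ^ k := by
  have hbound : ∀ r : ℝ, ∃ u : ℕ → ℝ, Summable u ∧
      ∀ k, ∀ z : ℂ, ‖z‖ ≤ r → ‖a k * antidiffPow k z‖ ≤ u k := fun r =>
    ⟨fun k => 2 * Real.exp (π * r) * (‖a k‖ * Real.exp (2 * π * r) ^ k),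
      (ha ⟨_, (Real.exp_pos _).le⟩).mul_left _, fun k z hz =>
        calc ‖a k * antidiffPow k z‖ = ‖a k‖ * ‖antidiffPow k z‖ := norm_mul _ _
          _ ≤ ‖a k‖ * (2 * Real.exp (π * r) * Real.exp (2 * π * r) ^ k) := by
            gcongr
            exact norm_antidiffPow_le_of_norm_le hz
          _ = _ := by ring⟩
  have hsummable : ∀ z, Summable fun k => a k * antidiffPow k z := fun z => by
    obtain ⟨u, hu, hau⟩ := hbound ‖z‖
    exact hu.of_norm_bounded fun k => hau k z le_rfl
  refine ⟨fun z => ∑' k, a k * antidiffPow k z, ?_, fun z => ?_⟩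
  · refine Complex.differentiable_tsum_of_summable_bound_on_balls
      (fun k => (differentiable_antidiffPow k).const_mul _) fun r => ?_
    obtain ⟨u, hu, hau⟩ := hbound r
    exact ⟨u, hu, fun k z hz => hau k z (mem_ball_zero_iff.mp hz).le⟩
  · rw [← (hsummable _).tsum_sub (hsummable _)]
    simp_rw [← mul_sub, antidiffPow_add_one_sub]

end Guichard

/-- For every entire holomorphic function `f` on `ℂ`, there exists an entire
holomorphic function `g` with `f z = g (z+1) - g z` for all `z`. -/
theorem difference_equation_entire (f : ℂ → ℂ) (hf : Differentiable ℂ f) :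
    ∃ g : ℂ → ℂ, Differentiable ℂ g ∧ ∀ z : ℂ, f z = g (z + 1) - g z := by
  obtain ⟨p, hp⟩ : ∃ p, HasFPowerSeriesOnBall f p 0 ∞ :=
    ⟨_, hf.hasFPowerSeriesOnBall 0 (R := 1) one_pos⟩
  have hcoeff : ∀ r : ℝ≥0, Summable fun k => ‖p.coeff k‖ * (r : ℝ) ^ k := fun r =>
    (p.radius_eq_top_iff_summable_norm.mp (top_le_iff.mp hp.r_le) r).congr fun k => by
      rw [p.norm_apply_eq_norm_coef]
  obtain ⟨g, hg, hdiff⟩ := Guichard.exists_differentiable_sub_eq_tsum _ hcoeff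
  refine ⟨g, hg, fun z => ?_⟩
  have hf_sum := hp.hasSum (y := z) (by simp)
  rw [zero_add] at hf_sum
  rw [hdiff, ← hf_sum.tsum_eq]
  simp_rw [p.apply_eq_pow_smul_coeff, smul_eq_mul, mul_comm]
end

section
/- The set Γ_{2,4} of classes in PSL(2,ℤ) of matrices (α β; γ δ) with α ≡ 1 mod 4, β ≡ 0 mod 4, γ ≡ 0 mod 2, δ ≡ 1 mod 2 forms a subgroup of index 2 in Γ₂ (the level-2 congruence subgroup of PSL(2,ℤ)). -/
/-- `SL(2,ℤ)`. -/
abbrev SL2Z := Matrix.SpecialLinearGroup (Fin 2) ℤ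

/-- `PSL(2,ℤ) = SL(2,ℤ)/{±1}`, realized as the quotient by the center. -/
abbrev PSL2Z := SL2Z ⧸ Subgroup.center SL2Z

/-- The condition that an integral matrix is congruent to the identity mod 2. -/
def IsGamma2Rep (A : SL2Z) : Prop :=
  (A : Matrix (Fin 2) (Fin 2) ℤ) 0 0 % 2 = 1 ∧
  (A : Matrix (Fin 2) (Fin 2) ℤ) 1 1 % 2 = 1 ∧
  (A : Matrix (Fin 2) (Fin 2) ℤ) 0 1 % 2 = 0 ∧
  (A : Matrix (Fin 2) (Fin 2) ℤ) 1 0 % 2 = 0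

/-- The condition `α ≡ 1 mod 4, β ≡ 0 mod 4, γ ≡ 0 mod 2, δ ≡ 1 mod 2`. -/
def IsGamma24Rep (A : SL2Z) : Prop :=
  (A : Matrix (Fin 2) (Fin 2) ℤ) 0 0 % 4 = 1 ∧
  (A : Matrix (Fin 2) (Fin 2) ℤ) 0 1 % 4 = 0 ∧
  (A : Matrix (Fin 2) (Fin 2) ℤ) 1 0 % 2 = 0 ∧
  (A : Matrix (Fin 2) (Fin 2) ℤ) 1 1 % 2 = 1

/-! On `Γ(2)` the map `A ↦ β/2 mod 2` is a homomorphism onto `ℤ/2`: for odd `α, δ'` and even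
`β, β'` one has `(αβ' + βδ')/2 ≡ β/2 + β'/2 mod 2`. Its kernel consists of the matrices of `Γ(2)`
with `β ≡ 0 mod 4`, which is the preimage of `Γ_{2,4}` since `-A` turns `α ≡ 3` into `α ≡ 1 mod 4`.
The kernel contains the centre `±1`, so the index `2` survives the passage to `PSL(2,ℤ)`. -/

open Matrix CongruenceSubgroup

lemma Subgroup.relIndex_map_map_of_ker_le {G G' : Type*} [Group G] [Group G'] (f : G →* G')
    {H K : Subgroup G} (hf : f.ker ≤ H) (hHK : H ≤ K) :
    (H.map f).relIndex (K.map f) = H.relIndex K := by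
  rw [Subgroup.relIndex_map_map, sup_eq_left.2 hf, sup_eq_left.2 (hf.trans hHK)]

lemma ZMod.intCast_mul_add_mul_ediv_two {a b c d : ℤ} (ha : Odd a) (hb : Even b) (hc : Even c)
    (hd : Odd d) :
    (((a * c + b * d) / 2 : ℤ) : ZMod 2) = ((b / 2 : ℤ) : ZMod 2) + ((c / 2 : ℤ) : ZMod 2) := by
  obtain ⟨s, rfl⟩ := ha
  obtain ⟨u, rfl⟩ := hb.two_dvd
  obtain ⟨v, rfl⟩ := hc.two_dvd
  obtain ⟨t, rfl⟩ := hd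
  have hsum : (2 * s + 1) * (2 * v) + 2 * u * (2 * t + 1) =
      2 * (u + v + 2 * (s * v + u * t)) := by
    ring
  rw [hsum]
  simp only [Int.mul_ediv_cancel_left _ two_ne_zero]
  push_cast
  reduce_mod_char

lemma isGamma2Rep_iff_mem_Gamma_two {A : SL2Z} : IsGamma2Rep A ↔ A ∈ Gamma 2 := by
  simp only [IsGamma2Rep, Gamma_mem, ZMod.intCast_eq_one_iff_odd, Int.odd_iff,
    ZMod.intCast_zmod_eq_zero_iff_dvd, Int.dvd_iff_emod_eq_zero]
  tauto

lemma SL2Z.coe_mul_apply_zero_one (A B : SL2Z) :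
    ((A * B : SL2Z) : Matrix (Fin 2) (Fin 2) ℤ) 0 1 =
      (A : Matrix (Fin 2) (Fin 2) ℤ) 0 0 * (B : Matrix (Fin 2) (Fin 2) ℤ) 0 1 +
      (A : Matrix (Fin 2) (Fin 2) ℤ) 0 1 * (B : Matrix (Fin 2) (Fin 2) ℤ) 1 1 := by
  simp [mul_apply, Fin.sum_univ_two]

def halfUpperRightParity : Gamma 2 →* Multiplicative (ZMod 2) where
  toFun A := .ofAdd ((((A : SL2Z) : Matrix (Fin 2) (Fin 2) ℤ) 0 1 / 2 : ℤ) : ZMod 2)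
  map_one' := by simp
  map_mul' A B := by
    obtain ⟨ha, -, hb, -⟩ := isGamma2Rep_iff_mem_Gamma_two.2 A.2
    obtain ⟨-, hd', hb', -⟩ := isGamma2Rep_iff_mem_Gamma_two.2 B.2
    simp only [Subgroup.coe_mul, SL2Z.coe_mul_apply_zero_one, ← ofAdd_add]
    rw [ZMod.intCast_mul_add_mul_ediv_two (Int.odd_iff.2 ha) (Int.even_iff.2 hb)
      (Int.even_iff.2 hb') (Int.odd_iff.2 hd')]

/-- The preimage `Γ_{2,4} ∪ -Γ_{2,4}` of `Γ_{2,4}` in `SL(2,ℤ)`. -/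
def gammaTwoFour : Subgroup SL2Z := halfUpperRightParity.ker.map (Gamma 2).subtype

lemma mem_gammaTwoFour_iff {A : SL2Z} :
    A ∈ gammaTwoFour ↔ IsGamma2Rep A ∧ (A : Matrix (Fin 2) (Fin 2) ℤ) 0 1 % 4 = 0 := by
  simp only [gammaTwoFour, Subgroup.mem_map, MonoidHom.mem_ker, halfUpperRightParity,
    MonoidHom.coe_mk, OneHom.coe_mk, ofAdd_eq_one, ZMod.intCast_zmod_eq_zero_iff_dvd,
    Subgroup.coe_subtype, Subtype.exists, exists_and_right, exists_eq_right, exists_prop,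
    ← isGamma2Rep_iff_mem_Gamma_two]
  refine and_congr_right fun h2 => ?_
  have := h2.2.2.1
  omega

lemma gammaTwoFour_le_Gamma_two : gammaTwoFour ≤ Gamma 2 :=
  Subgroup.map_subtype_le _

lemma halfUpperRightParity_surjective : Function.Surjective halfUpperRightParity := by
  intro y
  obtain ⟨k, hk⟩ := ZMod.intCast_surjective (Multiplicative.toAdd y)
  have hT : ModularGroup.T ^ (2 * k) ∈ Gamma 2 := by
    simpa using ModularGroup_T_pow_mem_Gamma 2 (2 * k) (dvd_mul_right 2 k)
  refine ⟨⟨ModularGroup.T ^ (2 * k), hT⟩, ?_⟩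
  simp [halfUpperRightParity, ModularGroup.coe_T_zpow, hk]

lemma relIndex_gammaTwoFour_Gamma_two : gammaTwoFour.relIndex (Gamma 2) = 2 := by
  rw [Subgroup.relIndex, gammaTwoFour, ← Subgroup.comap_subtype,
    Subgroup.comap_map_eq_self_of_injective (Subgroup.subtype_injective _), Subgroup.index_ker,
    MonoidHom.range_eq_top.2 halfUpperRightParity_surjective]
  simp

lemma center_le_gammaTwoFour : Subgroup.center SL2Z ≤ gammaTwoFour := by
  intro A hA
  obtain ⟨r, hr, hrA⟩ := Matrix.SpecialLinearGroup.mem_center_iff.1 hA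
  have hr2 : r ^ 2 = 1 := by simpa using hr
  have hr_odd : r % 2 = 1 := Int.odd_iff.1 ((Int.odd_pow' two_ne_zero).1 (hr2 ▸ odd_one))
  have hentry (i j : Fin 2) : (A : Matrix (Fin 2) (Fin 2) ℤ) i j = if i = j then r else 0 := by
    rw [← hrA, scalar_apply, diagonal_apply]
  simp [mem_gammaTwoFour_iff, IsGamma2Rep, hentry, hr_odd]

lemma neg_one_mem_center : (-1 : SL2Z) ∈ Subgroup.center SL2Z :=
  Subgroup.mem_center_iff.2 fun B => by simp

lemma PSL2Z.mk_neg (A : SL2Z) : (QuotientGroup.mk (-A) : PSL2Z) = QuotientGroup.mk A := by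
  rw [← neg_one_mul, QuotientGroup.mk_mul, (QuotientGroup.eq_one_iff _).2 neg_one_mem_center,
    one_mul]

lemma IsGamma24Rep.mem_gammaTwoFour {A : SL2Z} (h : IsGamma24Rep A) : A ∈ gammaTwoFour := by
  obtain ⟨ha, hb, hc, hd⟩ := h
  exact mem_gammaTwoFour_iff.2 ⟨⟨by omega, hd, by omega, hc⟩, hb⟩

lemma isGamma24Rep_or_neg_of_mem_gammaTwoFour {A : SL2Z} (hA : A ∈ gammaTwoFour) :
    IsGamma24Rep A ∨ IsGamma24Rep (-A) := by
  obtain ⟨⟨ha, hd, -, hc⟩, hb⟩ := mem_gammaTwoFour_iff.1 hA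
  by_cases h : (A : Matrix (Fin 2) (Fin 2) ℤ) 0 0 % 4 = 1
  · exact .inl ⟨h, hb, hc, hd⟩
  · right
    simp only [IsGamma24Rep, Matrix.SpecialLinearGroup.coe_neg, neg_apply]
    omega

lemma coe_map_gammaTwoFour :
    (gammaTwoFour.map (QuotientGroup.mk' (Subgroup.center SL2Z)) : Set PSL2Z) =
      {x | ∃ A : SL2Z, (QuotientGroup.mk A : PSL2Z) = x ∧ IsGamma24Rep A} := by
  ext x
  constructor
  · rintro ⟨A, hA, rfl⟩
    rcases isGamma24Rep_or_neg_of_mem_gammaTwoFour hA with h | h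
    · exact ⟨A, rfl, h⟩
    · exact ⟨-A, PSL2Z.mk_neg A, h⟩
  · rintro ⟨A, rfl, h⟩
    exact ⟨A, h.mem_gammaTwoFour, rfl⟩

lemma coe_map_Gamma_two :
    ((Gamma 2).map (QuotientGroup.mk' (Subgroup.center SL2Z)) : Set PSL2Z) =
      {x | ∃ A : SL2Z, (QuotientGroup.mk A : PSL2Z) = x ∧ IsGamma2Rep A} := by
  ext x
  simp [isGamma2Rep_iff_mem_Gamma_two, and_comm]

/-- The classes in `PSL(2,ℤ)` of matrices with `α ≡ 1 (4), β ≡ 0 (4),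
γ ≡ 0 (2), δ ≡ 1 (2)` form a subgroup `Γ_{2,4}` of index `2` in the level-2
congruence subgroup `Γ₂` of `PSL(2,ℤ)`. -/
theorem gamma_two_four_subgroup_index_two :
    ∃ H24 H2 : Subgroup PSL2Z,
      (H24 : Set PSL2Z) =
        {x | ∃ A : SL2Z, (QuotientGroup.mk A : PSL2Z) = x ∧ IsGamma24Rep A} ∧
      (H2 : Set PSL2Z) =
        {x | ∃ A : SL2Z, (QuotientGroup.mk A : PSL2Z) = x ∧ IsGamma2Rep A} ∧
      H24 ≤ H2 ∧
      H24.relIndex H2 = 2 := by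
  refine ⟨_, _, coe_map_gammaTwoFour, coe_map_Gamma_two,
    Subgroup.map_mono gammaTwoFour_le_Gamma_two, ?_⟩
  have hker : (QuotientGroup.mk' (Subgroup.center SL2Z)).ker ≤ gammaTwoFour :=
    (QuotientGroup.ker_mk' _).le.trans center_le_gammaTwoFour
  rw [Subgroup.relIndex_map_map_of_ker_le _ hker gammaTwoFour_le_Gamma_two,
    relIndex_gammaTwoFour_Gamma_two]
end
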